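/- arXiv:2110.01126 — 3 statements merged into one kernel-verified Lean document; each statement's English description precedes it below -/
import Mathlib

section
/- Let X be an N×N real symmetric positive definite matrix. For each i, let u_i : ℝ → ℝ be differentiable with u_i(0) = 0 and 0 < u_i'(v) < k_i for all v, where the diagonal matrix K = diag(k_1,…,k_N) satisfies 0 ≺ K ≺ 2X^{-1}. Then v = 0 is an equilibrium of the discrete-time system v_{t} = v_{t-1} - X·u(v_{t-1}) (where u acts componentwise), and the Jacobian of the update map at any point v, namely I - X·diag(u_1'(v_1),…,u_N'(v_N)), has spectral radius strictly less than 1. -/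
/-!
If `(I - X D) x = λ x` with `x ≠ 0` and `D = diag (u_i'(v_i))`, multiplying by `X⁻¹` gives
`D x = (1 - λ) X⁻¹ x` and `(2 X⁻¹ - D) x = (1 + λ) X⁻¹ x`. Pairing with `x*`, the Hermitian forms
of `X⁻¹`, `D` and `2 X⁻¹ - D ≻ 2 X⁻¹ - K ≻ 0` are positive reals, hence so are `1 - λ` and
`1 + λ`, i.e. `λ ∈ (-1, 1)`. Complex eigenvectors are handled by complexifying the real
matrices, which preserves positive definiteness.
-/

open Matrix
open scoped ComplexOrder

theorem Complex.norm_lt_of_neg_lt_of_lt {z : ℂ} {r : ℝ} (h₁ : -r < z) (h₂ : z < r) : ‖z‖ < r := by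
  have him : z.im = 0 := by simpa using (lt_def.mp h₂).2
  rw [← re_add_im z, him, ofReal_zero, zero_mul, add_zero, norm_real, Real.norm_eq_abs, abs_lt]
  exact ⟨by simpa using (lt_def.mp h₁).1, by simpa using (lt_def.mp h₂).1⟩

namespace Matrix

variable {n : Type*} [Fintype n]

theorem exists_mulVec_eq_smul_of_mem_spectrum [DecidableEq n] {K : Type*} [Field K]
    {A : Matrix n n K} {μ : K} (h : μ ∈ spectrum K A) : ∃ x ≠ 0, A *ᵥ x = μ • x := by
  rw [spectrum.mem_iff, isUnit_iff_isUnit_det, isUnit_iff_ne_zero, not_not,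
    ← exists_mulVec_eq_zero_iff] at h
  obtain ⟨x, hx0, hx⟩ := h
  refine ⟨x, hx0, ?_⟩
  rw [Algebra.algebraMap_eq_smul_one, sub_mulVec, smul_mulVec, one_mulVec, sub_eq_zero] at hx
  exact hx.symm

theorem map_nonsing_inv [DecidableEq n] {α β : Type*} [CommRing α] [CommRing β] (f : α →+* β)
    {A : Matrix n n α} (hA : IsUnit A.det) : A⁻¹.map f = (A.map f)⁻¹ :=
  (inv_eq_left_inv <| by
    rw [← Matrix.map_mul, nonsing_inv_mul _ hA, Matrix.map_one _ f.map_zero f.map_one]).symm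

namespace PosDef

theorem map_ofReal [DecidableEq n] {A : Matrix n n ℝ} (hA : A.PosDef) :
    (A.map Complex.ofReal).PosDef := by
  obtain ⟨B, rfl⟩ : ∃ B, A = star B * B := by
    open scoped MatrixOrder in
    exact CStarAlgebra.nonneg_iff_eq_star_mul_self.mp hA.posSemidef.nonneg
  have hB : IsUnit (B.map Complex.ofReal) :=
    (isUnit_of_mul_isUnit_right hA.isUnit).map Complex.ofRealHom.mapMatrix
  have hmap : (star B * B).map Complex.ofReal =
      (B.map Complex.ofReal)ᴴ * B.map Complex.ofReal := by
    rw [← conjTranspose_map _ fun _ => by simp, ← star_eq_conjTranspose]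
    exact Matrix.map_mul (f := Complex.ofRealHom)
  rw [hmap]
  exact .conjTranspose_mul_self _ (mulVec_injective_iff_isUnit.mpr hB)

theorem pos_of_mulVec_eq_smul_mulVec {R : Type*} [CommRing R] [PartialOrder R] [StarRing R]
    [MulPosReflectLT R] {A B : Matrix n n R} (hA : A.PosDef) (hB : B.PosDef) {x : n → R}
    (hx : x ≠ 0) {μ : R} (h : A *ᵥ x = μ • B *ᵥ x) : 0 < μ :=
  pos_of_mul_pos_left (by simpa [h, dotProduct_smul] using hA.dotProduct_mulVec_pos hx)
    (hB.dotProduct_mulVec_pos hx).le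

theorem norm_lt_one_of_mem_spectrum_one_sub_mul [DecidableEq n] {X D : Matrix n n ℂ}
    (hX : X.PosDef) (hD : D.PosDef) (hXD : ((2 : ℂ) • X⁻¹ - D).PosDef) {lam : ℂ}
    (hlam : lam ∈ spectrum ℂ (1 - X * D)) : ‖lam‖ < 1 := by
  obtain ⟨x, hx0, hx⟩ := exists_mulVec_eq_smul_of_mem_spectrum hlam
  have hPx : (X⁻¹ - D) *ᵥ x = lam • X⁻¹ *ᵥ x := by
    rw [← nonsing_inv_mul_cancel_left X D (X.isUnit_iff_isUnit_det.mp hX.isUnit),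
      ← mul_one_sub, ← mulVec_mulVec, hx, mulVec_smul]
  have h₁ : D *ᵥ x = (1 - lam) • X⁻¹ *ᵥ x := by
    rw [sub_smul, one_smul, ← hPx, sub_mulVec, sub_sub_cancel]
  have h₂ : ((2 : ℂ) • X⁻¹ - D) *ᵥ x = (1 + lam) • X⁻¹ *ᵥ x := by
    rw [add_smul, one_smul, ← hPx, two_smul, add_sub_assoc, add_mulVec]
  refine Complex.norm_lt_of_neg_lt_of_lt ?_ ?_
  · simpa [neg_lt_iff_pos_add'] using hXD.pos_of_mulVec_eq_smul_mulVec hX.inv hx0 h₂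
  · simpa using hD.pos_of_mulVec_eq_smul_mulVec hX.inv hx0 h₁

end PosDef

end Matrix

theorem voltage_dynamics_stable_general {N : ℕ} (X : Matrix (Fin N) (Fin N) ℝ)
    (hX : X.PosDef) (u : Fin N → ℝ → ℝ) (k : Fin N → ℝ)
    (hu0 : ∀ i, u i 0 = 0)
    (hderiv : ∀ i v, 0 < deriv (u i) v ∧ deriv (u i) v < k i)
    (hK : ((2 : ℝ) • X⁻¹ - Matrix.diagonal k).PosDef) :
    (fun v : Fin N → ℝ => v - X.mulVec (fun i => u i (v i))) 0 = 0 ∧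
    ∀ v : Fin N → ℝ, ∀ lam : ℂ,
      lam ∈ spectrum ℂ (((1 : Matrix (Fin N) (Fin N) ℝ)
          - X * Matrix.diagonal (fun i => deriv (u i) (v i))).map Complex.ofReal) →
      ‖lam‖ < 1 := by
  refine ⟨by simp only [Pi.zero_apply, hu0, zero_sub, neg_eq_zero]; exact X.mulVec_zero,
    fun v lam hlam => ?_⟩
  set d : Fin N → ℝ := fun i => deriv (u i) (v i)
  have hD : (diagonal d).PosDef := .diagonal fun i => (hderiv i (v i)).1
  have hXD : ((2 : ℝ) • X⁻¹ - diagonal d).PosDef := by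
    rw [← sub_add_sub_cancel _ (diagonal k), diagonal_sub]
    exact hK.add_posSemidef (.diagonal fun i => sub_nonneg.mpr (hderiv i (v i)).2.le)
  have hinv : X⁻¹.map Complex.ofReal = (X.map Complex.ofReal)⁻¹ :=
    map_nonsing_inv Complex.ofRealHom (X.isUnit_iff_isUnit_det.mp hX.isUnit)
  have hmul : (X * diagonal d).map Complex.ofReal =
      X.map Complex.ofReal * (diagonal d).map Complex.ofReal :=
    Matrix.map_mul (f := Complex.ofRealHom)
  refine hX.map_ofReal.norm_lt_one_of_mem_spectrum_one_sub_mul hD.map_ofReal ?_ ?_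
  · simpa [Matrix.map_sub, Matrix.map_smul' _ _ _ Complex.ofReal_mul, hinv] using hXD.map_ofReal
  · simpa [Matrix.map_sub, hmul] using hlam

/-- Theorem 1 of the paper: under Lipschitz-type bounds `0 < u_i' < k_i` with
`0 ≺ diag(k) ≺ 2X⁻¹`, the origin is an equilibrium of
`v ↦ v - X·u(v)` and the Jacobian `I - X·diag(u_i'(v_i))` at any point has
spectral radius strictly less than 1. -/
theorem voltage_dynamics_stable {N : ℕ} (X : Matrix (Fin N) (Fin N) ℝ)
    (hX : X.PosDef) (u : Fin N → ℝ → ℝ) (k : Fin N → ℝ)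
    (hdiff : ∀ i, Differentiable ℝ (u i))
    (hu0 : ∀ i, u i 0 = 0)
    (hderiv : ∀ i v, 0 < deriv (u i) v ∧ deriv (u i) v < k i)
    (hk : ∀ i, 0 < k i)
    (hK : ((2 : ℝ) • X⁻¹ - Matrix.diagonal k).PosDef) :
    (fun v : Fin N → ℝ => v - X.mulVec (fun i => u i (v i))) 0 = 0 ∧
    ∀ v : Fin N → ℝ, ∀ lam : ℂ,
      lam ∈ spectrum ℂ (((1 : Matrix (Fin N) (Fin N) ℝ)
          - X * Matrix.diagonal (fun i => deriv (u i) (v i))).map Complex.ofReal) →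
      ‖lam‖ < 1 :=
  voltage_dynamics_stable_general X hX u k hu0 hderiv hK
end

section
/- Let u(v) = Σ_j s^j ReLU(v + b^j) + Σ_j z^j ReLU(-v + d^j) with b^1 = d^1 = 0, b^j and d^j nonincreasing, partial sums 0 < Σ_{j≤l} s^j < k and -k < Σ_{j≤l} z^j < 0 for all l. Then u(0) = 0, u(v) ≥ 0 for v ≥ 0, u(v) ≤ 0 for v ≤ 0, and u is monotonically nondecreasing; i.e., u satisfies the sign and monotonicity conditions of Corollary 1. -/
/-- Abel-type summation bound: if all partial sums of `a` are nonnegative and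
`c` is nonnegative and nonincreasing (on the relevant range), then
`∑ a i * c i ≥ 0`. -/
lemma abel_nonneg (a : ℕ → ℝ) :
    ∀ (n : ℕ) (c : ℕ → ℝ),
      (∀ i, i < n → 0 ≤ ∑ j ∈ Finset.range (i + 1), a j) →
      (∀ i, i < n → 0 ≤ c i) →
      (∀ i, i + 1 < n → c (i + 1) ≤ c i) →
      0 ≤ ∑ i ∈ Finset.range n, a i * c i := by
  intro n
  induction n with
  | zero => intro c _ _ _; simp
  | succ n ih =>
    intro c hS hc0 hcmono
    have hchain : ∀ i, i < n → c n ≤ c i := by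
      intro i hi
      have : ∀ t, i + t ≤ n → c (i + t) ≤ c i := by
        intro t
        induction t with
        | zero => intro _; simp
        | succ t iht =>
          intro ht
          have h1 : i + t + 1 < n + 1 := by omega
          calc c (i + t + 1) ≤ c (i + t) := hcmono _ h1
            _ ≤ c i := iht (by omega)
      have := this (n - i) (by omega)
      rwa [Nat.add_sub_cancel' (le_of_lt hi)] at this
    have key : ∑ i ∈ Finset.range (n + 1), a i * c i
        = (∑ i ∈ Finset.range n, a i * (c i - c n))
          + (∑ i ∈ Finset.range (n + 1), a i) * c n := by
      rw [Finset.sum_range_succ, Finset.sum_range_succ, add_mul, Finset.sum_mul,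
        ← add_assoc, ← Finset.sum_add_distrib]
      congr 1
      exact Finset.sum_congr rfl fun i _ => by ring
    rw [key]
    have h1 : 0 ≤ ∑ i ∈ Finset.range n, a i * (c i - c n) := by
      apply ih
      · intro i hi; exact hS i (by omega)
      · intro i hi; have := hchain i hi; linarith
      · intro i hi
        have := hcmono i (by omega)
        linarith
    have h2 : 0 ≤ (∑ i ∈ Finset.range (n + 1), a i) * c n := by
      apply mul_nonneg (hS n (by omega)) (hc0 n (by omega))
    linarith

/-- Monotonicity in the shift of the increment of `ReLU`. -/
lemma relu_incr_mono (x y t₁ t₂ : ℝ) (hxy : x ≤ y) (ht : t₁ ≤ t₂) :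
    max (y + t₁) 0 - max (x + t₁) 0 ≤ max (y + t₂) 0 - max (x + t₂) 0 := by
  rcases le_total (x + t₁) 0 with h1 | h1 <;>
  rcases le_total (y + t₁) 0 with h2 | h2 <;>
  rcases le_total (x + t₂) 0 with h3 | h3 <;>
  rcases le_total (y + t₂) 0 with h4 | h4 <;>
  simp [max_eq_left, max_eq_right, h1, h2, h3, h4] <;> linarith

/-- Convert a `Fin` `Iic`-partial sum to a `range` sum of the extension by 0. -/
lemma sum_Iic_eq_sum_range {m : ℕ} (f : Fin m → ℝ) (l : Fin m) :
    ∑ j ∈ Finset.Iic l, f j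
      = ∑ j ∈ Finset.range ((l : ℕ) + 1),
          (fun i => if h : i < m then f ⟨i, h⟩ else 0) j := by
  have hr : Finset.range ((l : ℕ) + 1) = Finset.Iic (l : ℕ) := by
    ext x; simp [Nat.lt_succ_iff]
  rw [hr, ← Fin.map_valEmbedding_Iic, Finset.sum_map]
  apply Finset.sum_congr rfl
  intro j _
  simp [Fin.valEmbedding, j.isLt]

/-- Full stacked-ReLU controller
`u(v) = Σ_j s_j ReLU(v + b_j) + Σ_j z_j ReLU(-v + d_j)` with `b_1 = d_1 = 0`,
`b, d` nonincreasing, partial sums of `s` in `(0,k)` and of `z` in `(-k,0)`.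
Then `u(0) = 0`, `u` has the same sign as its argument, and `u` is
monotonically nondecreasing. -/
theorem stacked_relu_controller_sign_monotone {m : ℕ} (hm : 0 < m)
    (s b z d : Fin m → ℝ) (k : ℝ) (hk : 0 < k)
    (hb1 : b ⟨0, hm⟩ = 0) (hd1 : d ⟨0, hm⟩ = 0)
    (hbmono : Antitone b) (hdmono : Antitone d)
    (hs : ∀ l : Fin m, 0 < ∑ j ∈ Finset.Iic l, s j ∧ ∑ j ∈ Finset.Iic l, s j < k)
    (hz : ∀ l : Fin m, -k < ∑ j ∈ Finset.Iic l, z j ∧ ∑ j ∈ Finset.Iic l, z j < 0)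
    (u : ℝ → ℝ)
    (hu : ∀ v, u v = (∑ j, s j * max (v + b j) 0) + ∑ j, z j * max (-v + d j) 0) :
    u 0 = 0 ∧
    (∀ v : ℝ, 0 ≤ v → 0 ≤ u v) ∧
    (∀ v : ℝ, v ≤ 0 → u v ≤ 0) ∧
    Monotone u := by
  -- b j ≤ 0 and d j ≤ 0 for all j
  have hb0 : ∀ j : Fin m, b j ≤ 0 := fun j => hb1 ▸ hbmono (Fin.mk_le_of_le_val (Nat.zero_le _))
  have hd0 : ∀ j : Fin m, d j ≤ 0 := fun j => hd1 ▸ hdmono (Fin.mk_le_of_le_val (Nat.zero_le _))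
  have hu0 : u 0 = 0 := by
    rw [hu]
    have h1 : ∀ j : Fin m, s j * max ((0:ℝ) + b j) 0 = 0 := by
      intro j
      rw [zero_add, max_eq_right (hb0 j), mul_zero]
    have h2 : ∀ j : Fin m, z j * max (-(0:ℝ) + d j) 0 = 0 := by
      intro j
      rw [neg_zero, zero_add, max_eq_right (hd0 j), mul_zero]
    rw [Finset.sum_congr rfl (fun j _ => h1 j), Finset.sum_congr rfl (fun j _ => h2 j)]
    simp
  -- extensions to ℕ
  set sN : ℕ → ℝ := fun i => if h : i < m then s ⟨i, h⟩ else 0 with hsN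
  set zN : ℕ → ℝ := fun i => if h : i < m then z ⟨i, h⟩ else 0 with hzN
  set bN : ℕ → ℝ := fun i => if h : i < m then b ⟨i, h⟩ else 0 with hbN
  set dN : ℕ → ℝ := fun i => if h : i < m then d ⟨i, h⟩ else 0 with hdN
  have hSs : ∀ i, i < m → 0 ≤ ∑ j ∈ Finset.range (i + 1), sN j := by
    intro i hi
    have := (hs ⟨i, hi⟩).1
    rw [sum_Iic_eq_sum_range s ⟨i, hi⟩] at this
    exact le_of_lt this
  have hSz : ∀ i, i < m → 0 ≤ ∑ j ∈ Finset.range (i + 1), (fun n => -zN n) j := by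
    intro i hi
    have := (hz ⟨i, hi⟩).2
    rw [sum_Iic_eq_sum_range z ⟨i, hi⟩] at this
    simp only [Finset.sum_neg_distrib]
    linarith
  have hmono : Monotone u := by
    intro v₁ v₂ hv
    rw [hu v₁, hu v₂]
    -- positive branch
    have hpos : (∑ j : Fin m, s j * max (v₁ + b j) 0)
        ≤ ∑ j : Fin m, s j * max (v₂ + b j) 0 := by
      have := abel_nonneg sN m
        (fun i => max (v₂ + bN i) 0 - max (v₁ + bN i) 0) hSs
        (by
          intro i hi
          show 0 ≤ max (v₂ + bN i) 0 - max (v₁ + bN i) 0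
          have : max (v₁ + bN i) 0 ≤ max (v₂ + bN i) 0 :=
            max_le_max (by linarith) le_rfl
          linarith)
        (by
          intro i hi
          show max (v₂ + bN (i+1)) 0 - max (v₁ + bN (i+1)) 0
              ≤ max (v₂ + bN i) 0 - max (v₁ + bN i) 0
          have hb : bN (i + 1) ≤ bN i := by
            simp only [hbN]
            rw [dif_pos hi, dif_pos (by omega : i < m)]
            exact hbmono (by simp [Fin.le_def])
          exact relu_incr_mono v₁ v₂ (bN (i + 1)) (bN i) hv hb)
      have heq : ∀ w : ℝ, (∑ j : Fin m, s j * max (w + b j) 0)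
          = ∑ i ∈ Finset.range m, sN i * max (w + bN i) 0 := by
        intro w
        rw [← Fin.sum_univ_eq_sum_range (fun i => sN i * max (w + bN i) 0) m]
        apply Finset.sum_congr rfl
        intro j _
        simp only [hsN, hbN, dif_pos j.isLt]
      rw [heq v₁, heq v₂]
      have hexp : ∑ i ∈ Finset.range m,
          sN i * (max (v₂ + bN i) 0 - max (v₁ + bN i) 0)
          = (∑ i ∈ Finset.range m, sN i * max (v₂ + bN i) 0)
            - ∑ i ∈ Finset.range m, sN i * max (v₁ + bN i) 0 := by
        rw [← Finset.sum_sub_distrib]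
        apply Finset.sum_congr rfl
        intro i _; ring
      rw [hexp] at this
      linarith
    -- negative branch
    have hneg : (∑ j : Fin m, z j * max (-v₁ + d j) 0)
        ≤ ∑ j : Fin m, z j * max (-v₂ + d j) 0 := by
      have := abel_nonneg (fun n => -zN n) m
        (fun i => max (-v₁ + dN i) 0 - max (-v₂ + dN i) 0) hSz
        (by
          intro i hi
          show 0 ≤ max (-v₁ + dN i) 0 - max (-v₂ + dN i) 0
          have : max (-v₂ + dN i) 0 ≤ max (-v₁ + dN i) 0 :=
            max_le_max (by linarith) le_rfl
          linarith)
        (by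
          intro i hi
          show max (-v₁ + dN (i+1)) 0 - max (-v₂ + dN (i+1)) 0
              ≤ max (-v₁ + dN i) 0 - max (-v₂ + dN i) 0
          have hd : dN (i + 1) ≤ dN i := by
            simp only [hdN]
            rw [dif_pos hi, dif_pos (by omega : i < m)]
            exact hdmono (by simp [Fin.le_def])
          have := relu_incr_mono (-v₂) (-v₁) (dN (i + 1)) (dN i) (by linarith) hd
          linarith)
      have heq : ∀ w : ℝ, (∑ j : Fin m, z j * max (-w + d j) 0)
          = ∑ i ∈ Finset.range m, zN i * max (-w + dN i) 0 := by
        intro w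
        rw [← Fin.sum_univ_eq_sum_range (fun i => zN i * max (-w + dN i) 0) m]
        apply Finset.sum_congr rfl
        intro j _
        simp only [hzN, hdN, dif_pos j.isLt]
      rw [heq v₁, heq v₂]
      have hexp : ∑ i ∈ Finset.range m,
          (-zN i) * (max (-v₁ + dN i) 0 - max (-v₂ + dN i) 0)
          = (∑ i ∈ Finset.range m, zN i * max (-v₂ + dN i) 0)
            - ∑ i ∈ Finset.range m, zN i * max (-v₁ + dN i) 0 := by
        rw [← Finset.sum_sub_distrib]
        apply Finset.sum_congr rfl
        intro i _; ring
      rw [hexp] at this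
      linarith
    linarith
  refine ⟨hu0, fun v hv => ?_, fun v hv => ?_, hmono⟩
  · have := hmono hv; rwa [hu0] at this
  · have := hmono hv; rwa [hu0] at this
end

section
/- Let X be symmetric positive definite with λ_min(X) > 0 and let D be diagonal with 0 < d ≤ D_{ii} ≤ k for all i, where k < 2/λ_max(X). Then the spectral radius of I - X·D is at most max(1 - d·λ_min(X), k·λ_max(X) - 1) < 1, giving an explicit contraction-rate bound for the linearized voltage dynamics. -/
/-!
Let `μ` be an eigenvalue of `X D` with eigenvector `v`, and put `u = D v`. Then
`u* X u = μ · v* D v`, and both `v* D v` and `u* u = v* D² v` are real and positive.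
Since `λ_min |u|² ≤ u* X u ≤ λ_max |u|²` and `d · v* D v ≤ v* D² v ≤ k · v* D v`,
the eigenvalue `μ` is real and lies in `[d λ_min, k λ_max]`, so every eigenvalue `1 - μ`
of `I - X D` has modulus at most `max (1 - d λ_min) (k λ_max - 1)`.
-/

open Matrix

namespace Finset

variable {ι : Type*} (s : Finset ι) {D w : ι → ℝ}

lemma mul_sum_le_sum_mul_self_mul {d : ℝ} (hd : 0 ≤ d) (hD : ∀ i ∈ s, d ≤ D i)
    (hw : ∀ i ∈ s, 0 ≤ w i) : d * ∑ i ∈ s, D i * w i ≤ ∑ i ∈ s, D i * D i * w i := by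
  rw [mul_sum]
  refine sum_le_sum fun i hi ↦ ?_
  rw [← mul_assoc]
  exact mul_le_mul_of_nonneg_right (mul_le_mul_of_nonneg_right (hD i hi) (hd.trans (hD i hi)))
    (hw i hi)

lemma sum_mul_self_mul_le_mul_sum {k : ℝ} (hD₀ : ∀ i ∈ s, 0 ≤ D i) (hD : ∀ i ∈ s, D i ≤ k)
    (hw : ∀ i ∈ s, 0 ≤ w i) : ∑ i ∈ s, D i * D i * w i ≤ k * ∑ i ∈ s, D i * w i := by
  rw [mul_sum]
  refine sum_le_sum fun i hi ↦ ?_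
  rw [← mul_assoc]
  exact mul_le_mul_of_nonneg_right (mul_le_mul_of_nonneg_right (hD i hi) (hD₀ i hi)) (hw i hi)

end Finset

namespace Matrix

variable {𝕜 n : Type*} [RCLike 𝕜] [Fintype n]

lemma star_ofReal_mul_dotProduct_ofReal_mul (D E : n → ℝ) (v : n → 𝕜) :
    star (fun i ↦ (D i : 𝕜) * v i) ⬝ᵥ (fun i ↦ (E i : 𝕜) * v i)
      = ((∑ i, D i * E i * ‖v i‖ ^ 2 : ℝ) : 𝕜) := by
  simp only [dotProduct, Pi.star_apply, star_mul', RCLike.star_def, RCLike.conj_ofReal]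
  push_cast
  refine Finset.sum_congr rfl fun i _ ↦ ?_
  rw [← RCLike.conj_mul]
  ring

variable [DecidableEq n]

lemma exists_mulVec_eq_smul_of_mem_spectrum_s18 {M : Matrix n n 𝕜} {μ : 𝕜}
    (hμ : μ ∈ spectrum 𝕜 M) : ∃ v ≠ 0, M *ᵥ v = μ • v := by
  rw [← spectrum_toLin', ← Module.End.hasEigenvalue_iff_mem_spectrum] at hμ
  obtain ⟨v, hv⟩ := hμ.exists_hasEigenvector
  exact ⟨v, hv.2, by simpa using hv.apply_eq_smul⟩

section RayleighBounds

open scoped MatrixOrder ComplexOrder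

variable {A : Matrix n n 𝕜} {c : ℝ}

lemma IsHermitian.le_re_dotProduct_mulVec (hA : A.IsHermitian) (hc : ∀ x ∈ spectrum ℝ A, c ≤ x)
    (v : n → 𝕜) :
    c * RCLike.re (star v ⬝ᵥ v) ≤ RCLike.re (star v ⬝ᵥ A *ᵥ v) := by
  have h := (le_iff.mp <| (algebraMap_le_iff_le_spectrum hA.isSelfAdjoint).mpr hc)
    |>.re_dotProduct_nonneg v
  simpa [sub_mulVec, Algebra.algebraMap_eq_smul_one, smul_mulVec, RCLike.smul_re] using h

lemma IsHermitian.re_dotProduct_mulVec_le (hA : A.IsHermitian) (hc : ∀ x ∈ spectrum ℝ A, x ≤ c)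
    (v : n → 𝕜) :
    RCLike.re (star v ⬝ᵥ A *ᵥ v) ≤ c * RCLike.re (star v ⬝ᵥ v) := by
  have h := (le_iff.mp <| (le_algebraMap_iff_spectrum_le hA.isSelfAdjoint).mpr hc)
    |>.re_dotProduct_nonneg v
  simpa [sub_mulVec, Algebra.algebraMap_eq_smul_one, smul_mulVec, RCLike.smul_re] using h

end RayleighBounds

lemma IsHermitian.spectrum_mul_diagonal_subset {A : Matrix n n 𝕜} (hA : A.IsHermitian)
    {a b : ℝ} (ha : 0 ≤ a) (hA_ge : ∀ x ∈ spectrum ℝ A, a ≤ x)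
    (hA_le : ∀ x ∈ spectrum ℝ A, x ≤ b) {D : n → ℝ} {d k : ℝ} (hd : 0 < d)
    (hD : ∀ i, d ≤ D i ∧ D i ≤ k) :
    spectrum 𝕜 (A * diagonal fun i ↦ (D i : 𝕜)) ⊆ (↑) '' Set.Icc (d * a) (k * b) := by
  intro μ hμ
  obtain ⟨v, hv, hAv⟩ := exists_mulVec_eq_smul_of_mem_spectrum_s18 hμ
  set u : n → 𝕜 := fun i ↦ (D i : 𝕜) * v i
  set S : ℝ := ∑ i, D i * ‖v i‖ ^ 2
  set T : ℝ := ∑ i, D i * D i * ‖v i‖ ^ 2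
  have hq : star u ⬝ᵥ A *ᵥ u = μ * S := by
    have hAu : A *ᵥ u = μ • v := by
      rw [← hAv, ← mulVec_mulVec]
      congr 1
      ext i
      exact (mulVec_diagonal (fun i ↦ (D i : 𝕜)) v i).symm
    rw [hAu, dotProduct_smul, smul_eq_mul]
    simpa [S] using congrArg (μ * ·) (star_ofReal_mul_dotProduct_ofReal_mul D 1 v)
  have hS : 0 < S := by
    obtain ⟨i, hi⟩ := Function.ne_iff.mp hv
    exact Finset.sum_pos' (fun j _ ↦ mul_nonneg (hd.le.trans (hD j).1) (sq_nonneg _))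
      ⟨i, Finset.mem_univ i, mul_pos (hd.trans_le (hD i).1) (pow_pos (norm_pos_iff.mpr hi) 2)⟩
  have hST : d * S ≤ T :=
    Finset.mul_sum_le_sum_mul_self_mul _ hd.le (fun i _ ↦ (hD i).1) fun i _ ↦ sq_nonneg _
  have hTS : T ≤ k * S :=
    Finset.sum_mul_self_mul_le_mul_sum _ (fun i _ ↦ hd.le.trans (hD i).1) (fun i _ ↦ (hD i).2)
      fun i _ ↦ sq_nonneg _
  have hlower := hA.le_re_dotProduct_mulVec hA_ge u
  have hupper := hA.re_dotProduct_mulVec_le hA_le u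
  have him := hA.im_star_dotProduct_mulVec_self u
  rw [star_ofReal_mul_dotProduct_ofReal_mul, RCLike.ofReal_re, hq, RCLike.re_mul_ofReal]
    at hlower hupper
  rw [hq, RCLike.im_mul_ofReal] at him
  have hT : 0 < T := (mul_pos hd hS).trans_le hST
  have hb : 0 ≤ b := ha.trans (le_of_mul_le_mul_right (hlower.trans hupper) hT)
  refine ⟨RCLike.re μ, ⟨le_of_mul_le_mul_right ?_ hS, le_of_mul_le_mul_right ?_ hS⟩, ?_⟩
  · calc d * a * S = a * (d * S) := by ring
      _ ≤ a * T := mul_le_mul_of_nonneg_left hST ha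
      _ ≤ RCLike.re μ * S := hlower
  · calc RCLike.re μ * S ≤ b * T := hupper
      _ ≤ b * (k * S) := mul_le_mul_of_nonneg_left hTS hb
      _ = k * b * S := by ring
  · exact RCLike.conj_eq_iff_re.mp <| RCLike.conj_eq_iff_im.mpr <|
      (mul_eq_zero.mp him).resolve_right hS.ne'

end Matrix

theorem explicit_contraction_bound_general {N : ℕ} (X : Matrix (Fin N) (Fin N) ℝ)
    (hX : X.PosDef) (lmin lmax : ℝ)
    (hmin : ∀ μ ∈ spectrum ℝ X, lmin ≤ μ)
    (hmaxmem : lmax ∈ spectrum ℝ X) (hmax : ∀ μ ∈ spectrum ℝ X, μ ≤ lmax)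
    (hlmin : 0 < lmin)
    (D : Fin N → ℝ) (d k : ℝ) (hd : 0 < d)
    (hD : ∀ i, d ≤ D i ∧ D i ≤ k) (hk : k < 2 / lmax) :
    (∀ lam : ℂ,
      lam ∈ spectrum ℂ (((1 : Matrix (Fin N) (Fin N) ℝ)
          - X * Matrix.diagonal D).map Complex.ofReal) →
      ‖lam‖ ≤ max (1 - d * lmin) (k * lmax - 1)) ∧
    max (1 - d * lmin) (k * lmax - 1) < 1 := by
  have hklmax : k * lmax < 2 := (lt_div_iff₀ (hlmin.trans_le (hmin lmax hmaxmem))).mp hk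
  refine ⟨fun lam hlam ↦ ?_, max_lt (by nlinarith) (by linarith)⟩
  set Xc := X.map Complex.ofReal
  have hXc : Xc.IsHermitian := hX.isHermitian.map _ fun x ↦ (Complex.conj_ofReal x).symm
  have hspec : spectrum ℝ Xc ⊆ spectrum ℝ X :=
    AlgHom.spectrum_apply_subset (Algebra.ofId ℝ ℂ).mapMatrix X
  have hmap : ((1 : Matrix (Fin N) (Fin N) ℝ) - X * diagonal D).map Complex.ofReal
      = algebraMap ℂ _ 1 - Xc * diagonal fun i ↦ (D i : ℂ) := by
    ext i j
    simp [Xc, mul_diagonal, one_apply, apply_ite Complex.ofReal]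
  rw [hmap, ← spectrum.singleton_sub_eq] at hlam
  obtain ⟨_, rfl, _, hμ, rfl⟩ := hlam
  obtain ⟨μ, ⟨hμ_ge, hμ_le⟩, rfl⟩ := hXc.spectrum_mul_diagonal_subset hlmin.le
    (fun x hx ↦ hmin x (hspec hx)) (fun x hx ↦ hmax x (hspec hx)) hd hD hμ
  beta_reduce
  rw [← RCLike.ofReal_one, ← RCLike.ofReal_sub, RCLike.norm_ofReal, abs_le]
  constructor <;> linarith [le_max_left (1 - d * lmin) (k * lmax - 1),
    le_max_right (1 - d * lmin) (k * lmax - 1)]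

/-- Explicit contraction-rate bound: if `D` is diagonal with
`0 < d ≤ D_ii ≤ k` and `k < 2/λ_max(X)`, then every eigenvalue of `I - X·D`
has modulus at most `max (1 - d·λ_min(X)) (k·λ_max(X) - 1)`, which is
strictly less than 1. -/
theorem explicit_contraction_bound {N : ℕ} (X : Matrix (Fin N) (Fin N) ℝ)
    (hX : X.PosDef) (lmin lmax : ℝ)
    (hminmem : lmin ∈ spectrum ℝ X) (hmin : ∀ μ ∈ spectrum ℝ X, lmin ≤ μ)
    (hmaxmem : lmax ∈ spectrum ℝ X) (hmax : ∀ μ ∈ spectrum ℝ X, μ ≤ lmax)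
    (hlmin : 0 < lmin)
    (D : Fin N → ℝ) (d k : ℝ) (hd : 0 < d)
    (hD : ∀ i, d ≤ D i ∧ D i ≤ k) (hk : k < 2 / lmax) :
    (∀ lam : ℂ,
      lam ∈ spectrum ℂ (((1 : Matrix (Fin N) (Fin N) ℝ)
          - X * Matrix.diagonal D).map Complex.ofReal) →
      ‖lam‖ ≤ max (1 - d * lmin) (k * lmax - 1)) ∧
    max (1 - d * lmin) (k * lmax - 1) < 1 :=
  explicit_contraction_bound_general X hX lmin lmax hmin hmaxmem hmax hlmin D d k hd hD hk
end
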